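/- arXiv:2509.20836 — 5 statements merged into one kernel-verified Lean document; each statement's English description precedes it below -/
import Mathlib

section
/- Let (X,μ,Y) and (W,ν,Z) be transverse G-spaces and φ_o : X_o → W a concrete transverse G-factor (strictly equivariant on a conull invariant X_o, φ_{o*}μ = ν, with Y_o := φ_o⁻¹(Z) ∩ X_o measure-equivalent to Y). Then φ_{o*}μ_Y = ν_Z; in particular the intensities agree: ι_μ(Y) = ι_ν(Z). -/
/-!
Both transverse measures are determined by their Campbell identities. Test the identity for
`Z` against `F` and the identity for `Y` against `F ∘ (id × φ_o)`: on the conull set where `φ_o`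
is equivariant and `Y` agrees with `φ_o⁻¹(Z)`, the two Campbell sums coincide pointwise, and the
resulting integrals over `μ` and over `ν = φ_o* μ` agree by a change of variables. This holds
even though the Campbell sums need not be measurable, since disintegrating `μ` along `φ_o`
(standard Borel) concentrates the conditional measures on the fibres. Hence
`m_G ⊗ φ_o* μ_Y = m_G ⊗ ν_Z`, and cancelling the σ-finite Haar factor gives `φ_o* μ_Y = ν_Z`.
-/

open MeasureTheory Set ProbabilityTheory
open scoped ENNReal

namespace MeasureTheory

lemma Measure.eq_of_prod_eq_prod {α β : Type*} [MeasurableSpace α]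
    [MeasurableSpace β] {m : Measure α} [SigmaFinite m] [NeZero m] {μ ν : Measure β} [SFinite μ]
    [SFinite ν] (h : m.prod μ = m.prod ν) : μ = ν := by
  obtain ⟨S, -, -, hpos, hfin⟩ :=
    exists_subset_measure_lt_top MeasurableSet.univ (Measure.measure_univ_pos.2 (NeZero.ne m))
  ext A -
  have hSA := congrArg (· (S ×ˢ A)) h
  simp only [Measure.prod_prod] at hSA
  exact (ENNReal.mul_right_inj hpos.ne' hfin.ne).1 hSA

section ChangeOfVariables

variable {X W : Type*} [MeasurableSpace X] [StandardBorelSpace X]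
  [MeasurableSpace W] [MeasurableEq W] (μ : Measure X) [IsFiniteMeasure μ] {φ : X → W}

lemma ae_ae_condDistrib_id_eq [Nonempty X] (hφ : Measurable φ) :
    ∀ᵐ w ∂μ.map φ, ∀ᵐ x ∂condDistrib id φ μ w, φ x = w := by
  have hgraph : ∀ᵐ p ∂μ.map (fun x ↦ (φ x, id x)), φ p.2 = p.1 :=
    (ae_map_iff (hφ.prodMk measurable_id).aemeasurable
      (measurableSet_eq_fun (hφ.comp measurable_snd) measurable_fst)).2 (ae_of_all _ fun _ ↦ rfl)
  rw [← compProd_map_condDistrib aemeasurable_id] at hgraph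
  exact Measure.ae_ae_of_ae_compProd hgraph

/-- `Φ` need not be measurable: for general `X` only `≥` holds (`lintegral_map_le`). -/
lemma lintegral_comp_eq_lintegral_map_of_standardBorel (hφ : Measurable φ) (Φ : W → ℝ≥0∞) :
    ∫⁻ x, Φ (φ x) ∂μ = ∫⁻ w, Φ w ∂μ.map φ := by
  rcases isEmpty_or_nonempty X with _ | _
  · simp [Measure.eq_zero_of_isEmpty μ]
  refine le_antisymm ?_ (lintegral_map_le Φ φ)
  rw [← iSup_lintegral_measurable_le_eq_lintegral]
  refine iSup₂_le fun t ht ↦ iSup_le fun hle ↦ ?_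
  calc ∫⁻ x, t x ∂μ = ∫⁻ p, t p.2 ∂μ.map (fun x ↦ (φ x, id x)) :=
        (lintegral_map (ht.comp measurable_snd) (hφ.prodMk measurable_id)).symm
    _ = ∫⁻ w, ∫⁻ x, t x ∂condDistrib id φ μ w ∂μ.map φ := by
        rw [← compProd_map_condDistrib aemeasurable_id]
        exact Measure.lintegral_compProd (f := fun p ↦ t p.2) (ht.comp measurable_snd)
    _ ≤ ∫⁻ w, Φ w ∂μ.map φ := by
        refine lintegral_mono_ae ((ae_ae_condDistrib_id_eq μ hφ).mono fun w hw ↦ ?_)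
        calc ∫⁻ x, t x ∂condDistrib id φ μ w
            ≤ ∫⁻ _, Φ w ∂condDistrib id φ μ w :=
              lintegral_mono_ae (hw.mono fun x hx ↦ hx ▸ hle x)
          _ = Φ w := by simp

end ChangeOfVariables

end MeasureTheory

section Campbell

variable {G X W : Type*} [Group G] [MulAction G X] [MulAction G W]

noncomputable def campbellSum (Y : Set X) (f : G × X → ℝ≥0∞) (x : X) : ℝ≥0∞ :=
  ∑' g : {g : G | g • x ∈ Y}, f ((g : G)⁻¹, (g : G) • x)

lemma campbellSum_comp_prodMap {Y : Set X} {Z : Set W} {φ : X → W} {x : X}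
    (hx : ∀ g : G, φ (g • x) = g • φ x ∧ (g • x ∈ Y ↔ g • φ x ∈ Z)) (f : G × W → ℝ≥0∞) :
    campbellSum Y (f ∘ Prod.map id φ) x = campbellSum Z f (φ x) := by
  have hsections : {g : G | g • x ∈ Y} = {g : G | g • φ x ∈ Z} := Set.ext fun g ↦ (hx g).2
  calc campbellSum Y (f ∘ Prod.map id φ) x
      = ∑' g : {g : G | g • x ∈ Y}, f ((g : G)⁻¹, (g : G) • φ x) :=
        tsum_congr fun g ↦ by simp [(hx g).1]
    _ = campbellSum Z f (φ x) := by rw [hsections]; rfl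

variable [MeasurableSpace G] [MeasurableSpace X] [StandardBorelSpace X]
  [MeasurableSpace W] [MeasurableEq W]

lemma prod_map_eq_prod_of_campbell {mG : Measure G} [SFinite mG] {μ : Measure X}
    [IsFiniteMeasure μ] {Y : Set X} {Z : Set W} {νY : Measure X} {νZ : Measure W} [SFinite νY]
    [SFinite νZ] {φ : X → W} (hφ : Measurable φ)
    (hCampbellY : ∀ f : G × X → ℝ≥0∞, Measurable f →
      ∫⁻ p, f p ∂mG.prod νY = ∫⁻ x, campbellSum Y f x ∂μ)
    (hCampbellZ : ∀ f : G × W → ℝ≥0∞, Measurable f →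
      ∫⁻ p, f p ∂mG.prod νZ = ∫⁻ w, campbellSum Z f w ∂μ.map φ)
    (hfactor : ∀ᵐ x ∂μ, ∀ g : G, φ (g • x) = g • φ x ∧ (g • x ∈ Y ↔ g • φ x ∈ Z)) :
    mG.prod (νY.map φ) = mG.prod νZ := by
  have hprod : mG.prod (νY.map φ) = (mG.prod νY).map (Prod.map id φ) := by
    rw [← Measure.map_prod_map mG νY measurable_id hφ, Measure.map_id]
  refine Measure.ext_of_lintegral _ fun F hF ↦ ?_
  calc ∫⁻ p, F p ∂mG.prod (νY.map φ)
      = ∫⁻ p, (F ∘ Prod.map id φ) p ∂mG.prod νY := by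
        rw [hprod, lintegral_map hF (measurable_id.prodMap hφ)]; rfl
    _ = ∫⁻ x, campbellSum Z F (φ x) ∂μ := by
        rw [hCampbellY _ (hF.comp (measurable_id.prodMap hφ))]
        exact lintegral_congr_ae (hfactor.mono fun x hx ↦ campbellSum_comp_prodMap hx F)
    _ = ∫⁻ p, F p ∂mG.prod νZ := by
        rw [lintegral_comp_eq_lintegral_map_of_standardBorel μ hφ, hCampbellZ F hF]

end Campbell

theorem transverse_factor_pushforward_general
    {G X W : Type*}
    [Group G] [TopologicalSpace G] [LocallyCompactSpace G]
    [SecondCountableTopology G] [MeasurableSpace G]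
    (mG : Measure G) [mG.IsHaarMeasure]
    [MeasurableSpace X] [StandardBorelSpace X]
    [MulAction G X]
    [MeasurableSpace W] [StandardBorelSpace W]
    [MulAction G W]
    (μ : Measure X) [IsProbabilityMeasure μ]
    (ν : Measure W)
    (Y : Set X)
    (Z : Set W)
    -- the transverse measures, characterized by the Campbell identities
    (νY : Measure X) [IsFiniteMeasure νY]
    (hCampbellY : ∀ f : G × X → ℝ≥0∞, Measurable f →
      ∫⁻ p, f p ∂(mG.prod νY)
        = ∫⁻ x, ∑' g : {g : G | g • x ∈ Y}, f (((g : G))⁻¹, (g : G) • x) ∂μ)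
    (νZ : Measure W) [IsFiniteMeasure νZ]
    (hCampbellZ : ∀ f : G × W → ℝ≥0∞, Measurable f →
      ∫⁻ p, f p ∂(mG.prod νZ)
        = ∫⁻ w, ∑' g : {g : G | g • w ∈ Z}, f (((g : G))⁻¹, (g : G) • w) ∂ν)
    -- `φ_o` is a concrete transverse `G`-factor on a conull invariant `X_o`
    (Xo : Set X) (hXoconull : μ Xoᶜ = 0)
    (hXoinv : ∀ g : G, ∀ x ∈ Xo, g • x ∈ Xo)
    (φo : X → W) (hφo : Measurable φo) (hφoμ : Measure.map φo μ = ν)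
    (hφoequiv : ∀ g : G, ∀ x ∈ Xo, φo (g • x) = g • φo x)
    -- `Y_o = φ_o⁻¹(Z) ∩ X_o` is measure equivalent to `Y`
    (hYo : ∀ᵐ x ∂μ,
      {g : G | g • x ∈ Y} = {g : G | g • x ∈ φo ⁻¹' Z ∩ Xo}) :
    Measure.map φo νY = νZ ∧ νY Set.univ = νZ Set.univ := by
  have hfactor : ∀ᵐ x ∂μ, ∀ g : G, φo (g • x) = g • φo x ∧ (g • x ∈ Y ↔ g • φo x ∈ Z) := by
    filter_upwards [hYo, mem_ae_iff.2 hXoconull] with x hx hxo g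
    have hg := Set.ext_iff.1 hx g
    simp only [mem_ofPred_eq, mem_inter_iff, mem_preimage, hφoequiv g x hxo, hXoinv g x hxo,
      and_true] at hg
    exact ⟨hφoequiv g x hxo, hg⟩
  subst hφoμ
  have hmap : νY.map φo = νZ :=
    Measure.eq_of_prod_eq_prod (prod_map_eq_prod_of_campbell hφo hCampbellY hCampbellZ hfactor)
  exact ⟨hmap, by rw [← hmap, Measure.map_apply hφo .univ, preimage_univ]⟩

/-- **Functoriality of transverse measures.** A concrete transverse `G`-factor
`φ_o : (X, μ, Y) → (W, ν, Z)` pushes the transverse measure `μ_Y` forward to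
`ν_Z`; in particular the intensities agree: `ι_μ(Y) = ι_ν(Z)`. -/
theorem transverse_factor_pushforward
    {G X W : Type*}
    [Group G] [TopologicalSpace G] [IsTopologicalGroup G] [LocallyCompactSpace G]
    [SecondCountableTopology G] [MeasurableSpace G] [BorelSpace G]
    (mG : Measure G) [mG.IsHaarMeasure] [mG.IsMulRightInvariant]
    [MeasurableSpace X] [StandardBorelSpace X]
    [MulAction G X] [MeasurableSMul G X]
    [MeasurableSpace W] [StandardBorelSpace W]
    [MulAction G W] [MeasurableSMul G W]
    (μ : Measure X) [IsProbabilityMeasure μ] [SMulInvariantMeasure G X μ]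
    (ν : Measure W) [IsProbabilityMeasure ν] [SMulInvariantMeasure G W ν]
    (Y : Set X) (hY : MeasurableSet Y)
    (hcross : ∀ x : X, {g : G | g • x ∈ Y}.Nonempty)
    (hlocfin : ∀ x : X, ∀ K : Set G, IsCompact K → ({g : G | g • x ∈ Y} ∩ K).Finite)
    (Z : Set W) (hZ : MeasurableSet Z)
    (hcrossZ : ∀ w : W, {g : G | g • w ∈ Z}.Nonempty)
    (hlocfinZ : ∀ w : W, ∀ K : Set G, IsCompact K → ({g : G | g • w ∈ Z} ∩ K).Finite)
    -- the transverse measures, characterized by the Campbell identities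
    (νY : Measure X) [IsFiniteMeasure νY] (hsuppY : νY Yᶜ = 0)
    (hCampbellY : ∀ f : G × X → ℝ≥0∞, Measurable f →
      ∫⁻ p, f p ∂(mG.prod νY)
        = ∫⁻ x, ∑' g : {g : G | g • x ∈ Y}, f (((g : G))⁻¹, (g : G) • x) ∂μ)
    (νZ : Measure W) [IsFiniteMeasure νZ] (hsuppZ : νZ Zᶜ = 0)
    (hCampbellZ : ∀ f : G × W → ℝ≥0∞, Measurable f →
      ∫⁻ p, f p ∂(mG.prod νZ)
        = ∫⁻ w, ∑' g : {g : G | g • w ∈ Z}, f (((g : G))⁻¹, (g : G) • w) ∂ν)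
    -- `φ_o` is a concrete transverse `G`-factor on a conull invariant `X_o`
    (Xo : Set X) (hXo : MeasurableSet Xo) (hXoconull : μ Xoᶜ = 0)
    (hXoinv : ∀ g : G, ∀ x ∈ Xo, g • x ∈ Xo)
    (φo : X → W) (hφo : Measurable φo) (hφoμ : Measure.map φo μ = ν)
    (hφoequiv : ∀ g : G, ∀ x ∈ Xo, φo (g • x) = g • φo x)
    -- `Y_o = φ_o⁻¹(Z) ∩ X_o` is measure equivalent to `Y`
    (hYo : ∀ᵐ x ∂μ,
      {g : G | g • x ∈ Y} = {g : G | g • x ∈ φo ⁻¹' Z ∩ Xo}) :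
    Measure.map φo νY = νZ ∧ νY Set.univ = νZ Set.univ :=
  transverse_factor_pushforward_general mG μ ν Y Z νY hCampbellY νZ hCampbellZ Xo hXoconull hXoinv
    φo hφo hφoμ hφoequiv hYo
end

section
/- Every lcsc group G with a right-invariant proper compatible metric d admits an equivariant Voronoi tessellation scheme: an assignment P ↦ {Θ(P,p) : p ∈ P} of a Borel partition of G to every nonempty locally finite set P ⊆ G such that (1) each cell Θ(P,p) consists of points x with d(x,p) = d(x,P), (2) if P ⊆ Q then Θ(P,p) ⊇ Θ(Q,p) for all p ∈ P, and (3) Θ(Pg, pg) = Θ(P,p)g for every g ∈ G and p ∈ P. -/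
/-!
Take as cell of `p ∈ P` the points `x` having `p` among their nearest points of `P`, with ties
broken by minimising `f (x * p⁻¹)` for a Borel injection `f : G → ℝ`, which exists because a
proper metric space is Polish. Right invariance of `d` makes nearest points equivariant, and the
tie-breaker is invariant because `(x * g) * (p * g)⁻¹ = x * p⁻¹`. If `p ∈ P ⊆ Q` is a nearest
point of `Q`, the nearest points of `P` are those of `Q` lying in `P`, so winning the tie-break
in `Q` means winning it in `P`: this is monotonicity.
Local finiteness makes the set of nearest points finite and nonempty, so the cells cover `G`,
and makes `P` countable, so the cells are Borel.
-/

open MeasureTheory Set Metric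

section LocallyFinite

variable {X : Type*} [TopologicalSpace X] {P : Set X}

theorem countable_of_finite_inter_isCompact [SigmaCompactSpace X]
    (hP : ∀ K, IsCompact K → (P ∩ K).Finite) : P.Countable := by
  rw [← inter_univ P, ← iUnion_compactCovering, inter_iUnion]
  exact countable_iUnion fun n => (hP _ (isCompact_compactCovering X n)).countable

theorem isClosed_of_finite_inter_isCompact [WeaklyLocallyCompactSpace X] [T1Space X]
    (hP : ∀ K, IsCompact K → (P ∩ K).Finite) : IsClosed P := by
  refine isClosed_of_closure_subset fun x hx => ?_
  obtain ⟨K, hK, hKx⟩ := exists_compact_mem_nhds x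
  have hxK : x ∈ closure (P ∩ K) := mem_closure_iff_nhds.2 fun U hU => by
    simpa only [inter_right_comm, inter_assoc] using
      (mem_closure_iff_nhds.1 hx) (U ∩ K) (Filter.inter_mem hU hKx)
  rw [(hP K hK).isClosed.closure_eq] at hxK
  exact hxK.1

end LocallyFinite

namespace Metric

variable {α : Type*} [PseudoMetricSpace α] {P Q : Set α} {x p : α}

def nearestPoints (P : Set α) (x : α) : Set α :=
  {p ∈ P | dist x p = infDist x P}

theorem nearestPoints_finite [ProperSpace α] (hP : ∀ K, IsCompact K → (P ∩ K).Finite) :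
    (nearestPoints P x).Finite :=
  (hP _ (isCompact_closedBall x (infDist x P))).subset fun _ hp =>
    ⟨hp.1, mem_closedBall'.2 hp.2.le⟩

theorem nearestPoints_nonempty [ProperSpace α] (hP : IsClosed P) (hne : P.Nonempty) :
    (nearestPoints P x).Nonempty :=
  let ⟨p, hp, hdist⟩ := hP.exists_infDist_eq_dist hne x
  ⟨p, hp, hdist.symm⟩

theorem nearestPoints_eq_inter_of_subset (hPQ : P ⊆ Q) (hp : p ∈ P)
    (hpQ : p ∈ nearestPoints Q x) : nearestPoints P x = P ∩ nearestPoints Q x := by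
  have hinf : infDist x P = infDist x Q :=
    le_antisymm (hpQ.2 ▸ infDist_le_dist_of_mem hp) (infDist_le_infDist_of_subset hPQ ⟨p, hp⟩)
  ext q
  simp only [nearestPoints, hinf, mem_inter_iff, mem_ofPred_eq]
  constructor
  · rintro ⟨hq, hdist⟩
    exact ⟨hq, hPQ hq, hdist⟩
  · rintro ⟨hq, -, hdist⟩
    exact ⟨hq, hdist⟩

theorem nearestPoints_image_of_isometry {Φ : α → α} (hΦ : Isometry Φ) :
    nearestPoints (Φ '' P) (Φ x) = Φ '' nearestPoints P x := by
  ext y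
  simp only [nearestPoints, infDist_image hΦ, mem_ofPred_eq, mem_image]
  constructor
  · rintro ⟨⟨p, hp, rfl⟩, hdist⟩
    exact ⟨p, ⟨hp, hΦ.dist_eq x p ▸ hdist⟩, rfl⟩
  · rintro ⟨p, ⟨hp, hdist⟩, rfl⟩
    exact ⟨⟨p, hp, rfl⟩, (hΦ.dist_eq x p).trans hdist⟩

end Metric

section Voronoi

variable {G β : Type*} [Group G] [PseudoMetricSpace G] [LinearOrder β]
  {f : G → β} {P Q : Set G} {p q x : G}

def voronoiCell (f : G → β) (P : Set G) (p : G) : Set G :=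
  {x | p ∈ nearestPoints P x ∧ ∀ q ∈ nearestPoints P x, f (x * p⁻¹) ≤ f (x * q⁻¹)}

theorem disjoint_voronoiCell (hf : Function.Injective f) (hpq : p ≠ q) :
    Disjoint (voronoiCell f P p) (voronoiCell f P q) := by
  refine disjoint_left.2 fun x hp hq => hpq ?_
  have : x * p⁻¹ = x * q⁻¹ := hf (le_antisymm (hp.2 q hq.1) (hq.2 p hp.1))
  exact inv_injective (mul_left_cancel this)

theorem exists_mem_voronoiCell (hfin : (nearestPoints P x).Finite)
    (hne : (nearestPoints P x).Nonempty) : ∃ p ∈ P, x ∈ voronoiCell f P p :=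
  let ⟨p, hp, hmin⟩ := exists_min_image _ (fun q => f (x * q⁻¹)) hfin hne
  ⟨p, hp.1, hp, hmin⟩

theorem iUnion_voronoiCell [ProperSpace G] (hne : P.Nonempty) (hclosed : IsClosed P)
    (hP : ∀ K, IsCompact K → (P ∩ K).Finite) : ⋃ p ∈ P, voronoiCell f P p = univ :=
  eq_univ_of_forall fun _ =>
    let ⟨_, hp, hx⟩ :=
      exists_mem_voronoiCell (nearestPoints_finite hP) (nearestPoints_nonempty hclosed hne)
    mem_iUnion₂_of_mem hp hx

theorem voronoiCell_mono (hPQ : P ⊆ Q) (hp : p ∈ P) :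
    voronoiCell f Q p ⊆ voronoiCell f P p := by
  rintro x ⟨hpQ, hmin⟩
  rw [voronoiCell, mem_ofPred_eq, nearestPoints_eq_inter_of_subset hPQ hp hpQ]
  exact ⟨⟨hp, hpQ⟩, fun q hq => hmin q hq.2⟩

theorem mul_right_mem_voronoiCell_image_iff [IsIsometricSMul Gᵐᵒᵖ G] (g : G) :
    x * g ∈ voronoiCell f ((· * g) '' P) (p * g) ↔ x ∈ voronoiCell f P p := by
  simp only [voronoiCell, mem_ofPred_eq, nearestPoints_image_of_isometry (isometry_mul_right g),
    (mul_left_injective g).mem_set_image, forall_mem_image, ← div_eq_mul_inv,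
    mul_div_mul_right_eq_div]

theorem voronoiCell_image_mul_right [IsIsometricSMul Gᵐᵒᵖ G] (g : G) :
    voronoiCell f ((· * g) '' P) (p * g) = (· * g) '' voronoiCell f P p := by
  ext x
  obtain ⟨y, rfl⟩ := mul_right_surjective g x
  rw [mul_right_mem_voronoiCell_image_iff, (mul_left_injective g).mem_set_image]

theorem measurableSet_voronoiCell [MeasurableSpace G] [BorelSpace G]
    [ContinuousConstSMul Gᵐᵒᵖ G] [TopologicalSpace β] [OrderClosedTopology β]
    [SecondCountableTopology β] [MeasurableSpace β] [OpensMeasurableSpace β]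
    (hf : Measurable f) (hP : P.Countable) (p : G) :
    MeasurableSet (voronoiCell f P p) := by
  have hnear (q : G) : MeasurableSet {x | q ∈ nearestPoints P x} := by
    by_cases hq : q ∈ P
    · simpa only [nearestPoints, mem_ofPred_eq, hq, true_and] using
        (isClosed_eq (by fun_prop) (continuous_infDist_pt P)).measurableSet
    · simp [nearestPoints, hq]
  have htie (q : G) : Measurable fun x => f (x * q⁻¹) :=
    hf.comp (continuous_const_smul (MulOpposite.op q⁻¹)).measurable
  have hcell : voronoiCell f P p = {x | p ∈ nearestPoints P x} ∩
      ⋂ q ∈ P, {x | q ∈ nearestPoints P x → f (x * p⁻¹) ≤ f (x * q⁻¹)} := by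
    ext x
    simp [voronoiCell, nearestPoints]
  rw [hcell]
  exact (hnear p).inter <|
    .biInter hP fun q _ => (hnear q).imp (measurableSet_le (htie p) (htie q))

end Voronoi

theorem exists_equivariant_voronoi_scheme_general
    {G : Type*} [Group G] [MetricSpace G] [ProperSpace G]
    [MeasurableSpace G] [BorelSpace G]
    (hdinv : ∀ x y g : G, dist (x * g) (y * g) = dist x y) :
    ∃ Θ : Set G → G → Set G,
      ∀ P : Set G, P.Nonempty → (∀ K : Set G, IsCompact K → (P ∩ K).Finite) →
        -- Borel partition of `G` into the cells `Θ(P,p)`, `p ∈ P`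
        (∀ p ∈ P, MeasurableSet (Θ P p)) ∧
        (∀ p ∈ P, ∀ q ∈ P, p ≠ q → Disjoint (Θ P p) (Θ P q)) ∧
        (⋃ p ∈ P, Θ P p) = Set.univ ∧
        -- (1) each cell consists of points whose nearest point of `P` is `p`
        (∀ p ∈ P, ∀ x ∈ Θ P p, dist x p = infDist x P) ∧
        -- (2) monotonicity
        (∀ Q : Set G, Q.Nonempty → (∀ K : Set G, IsCompact K → (Q ∩ K).Finite) →
          P ⊆ Q → ∀ p ∈ P, Θ Q p ⊆ Θ P p) ∧
        -- (3) equivariance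
        (∀ g : G, ∀ p ∈ P,
          Θ ((fun x => x * g) '' P) (p * g) = (fun x => x * g) '' Θ P p) := by
  have : IsIsometricSMul Gᵐᵒᵖ G := ⟨fun g => .of_dist_eq fun x y => hdinv x y g.unop⟩
  obtain ⟨f, hf⟩ := exists_measurableEmbedding_real G
  refine ⟨voronoiCell f, fun P hne hP => ⟨?_, ?_, ?_, ?_, ?_, ?_⟩⟩
  · exact fun p _ =>
      measurableSet_voronoiCell hf.measurable (countable_of_finite_inter_isCompact hP) p
  · exact fun p _ q _ => disjoint_voronoiCell hf.injective
  · exact iUnion_voronoiCell hne (isClosed_of_finite_inter_isCompact hP) hP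
  · exact fun p _ x hx => hx.1.2
  · exact fun Q _ _ hPQ p => voronoiCell_mono hPQ
  · exact fun g p _ => voronoiCell_image_mul_right g

/-- **Existence of equivariant Voronoi tessellation schemes.** An lcsc group
`G` carrying a right-invariant proper compatible metric admits an assignment
`P ↦ {Θ(P,p) : p ∈ P}` of a Borel partition of `G` to every nonempty locally
finite `P ⊆ G` such that each cell consists of points with `p` among their
nearest points of `P`, the scheme is monotone (`P ⊆ Q` implies
`Θ(P,p) ⊇ Θ(Q,p)`), and equivariant (`Θ(Pg, pg) = Θ(P,p)g`). -/
theorem exists_equivariant_voronoi_scheme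
    {G : Type*} [Group G] [MetricSpace G] [ProperSpace G]
    [SecondCountableTopology G] [IsTopologicalGroup G]
    [MeasurableSpace G] [BorelSpace G] [LocallyCompactSpace G]
    (hdinv : ∀ x y g : G, dist (x * g) (y * g) = dist x y) :
    ∃ Θ : Set G → G → Set G,
      ∀ P : Set G, P.Nonempty → (∀ K : Set G, IsCompact K → (P ∩ K).Finite) →
        -- Borel partition of `G` into the cells `Θ(P,p)`, `p ∈ P`
        (∀ p ∈ P, MeasurableSet (Θ P p)) ∧
        (∀ p ∈ P, ∀ q ∈ P, p ≠ q → Disjoint (Θ P p) (Θ P q)) ∧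
        (⋃ p ∈ P, Θ P p) = Set.univ ∧
        -- (1) each cell consists of points whose nearest point of `P` is `p`
        (∀ p ∈ P, ∀ x ∈ Θ P p, dist x p = infDist x P) ∧
        -- (2) monotonicity
        (∀ Q : Set G, Q.Nonempty → (∀ K : Set G, IsCompact K → (Q ∩ K).Finite) →
          P ⊆ Q → ∀ p ∈ P, Θ Q p ⊆ Θ P p) ∧
        -- (3) equivariance
        (∀ g : G, ∀ p ∈ P,
          Θ ((fun x => x * g) '' P) (p * g) = (fun x => x * g) '' Θ P p) :=
  exists_equivariant_voronoi_scheme_general hdinv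
end

section
/- Let d be a right-invariant metric on a group G, and let P ⊆ Q be locally finite subsets with all D(x,·) finite nonempty. Fix a linear order ≺ on G and define Θ(P,p) = {x : p ∈ D(x,P), xp⁻¹ = min_≺ xD(x,P)⁻¹}. Then for every p ∈ P: Θ(Q,p) ⊆ Θ(P,p). Moreover, if x ∈ Θ(Q,p) then D(x,P) ⊆ D(x,Q). -/
open Metric Set

/-- The set of nearest points of `S` to `x`: `D(x,S) = {p ∈ S : d(x,p) = d(x,S)}`. -/
def nearestPts {G : Type*} [MetricSpace G] (x : G) (S : Set G) : Set G :=
  {p ∈ S | dist x p = infDist x S}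

/-- The Voronoi cell of `p` relative to `S`, with ties broken by a linear order:
`Θ(S,p) = {x : p ∈ D(x,S) and x p⁻¹ = min_≺ x D(x,S)⁻¹}`. -/
def vorCell {G : Type*} [Group G] [MetricSpace G] [LinearOrder G]
    (S : Set G) (p : G) : Set G :=
  {x | p ∈ nearestPts x S ∧ ∀ q ∈ nearestPts x S, x * p⁻¹ ≤ x * q⁻¹}

section NearestPts

variable {X : Type*} [MetricSpace X] {x p : X} {P Q : Set X}

theorem infDist_eq_of_mem_nearestPts_of_subset (hPQ : P ⊆ Q) (hp : p ∈ P)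
    (hpQ : p ∈ nearestPts x Q) : infDist x P = infDist x Q :=
  le_antisymm (hpQ.2 ▸ infDist_le_dist_of_mem hp) (infDist_le_infDist_of_subset hPQ ⟨p, hp⟩)

theorem mem_nearestPts_of_subset (hPQ : P ⊆ Q) (hp : p ∈ P) (hpQ : p ∈ nearestPts x Q) :
    p ∈ nearestPts x P :=
  ⟨hp, hpQ.2.trans (infDist_eq_of_mem_nearestPts_of_subset hPQ hp hpQ).symm⟩

theorem nearestPts_subset_of_subset (hPQ : P ⊆ Q) (hp : p ∈ P) (hpQ : p ∈ nearestPts x Q) :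
    nearestPts x P ⊆ nearestPts x Q := fun _ hq =>
  ⟨hPQ hq.1, hq.2.trans (infDist_eq_of_mem_nearestPts_of_subset hPQ hp hpQ)⟩

end NearestPts

theorem vorCell_subset_of_subset {G : Type*} [Group G] [MetricSpace G] [LinearOrder G]
    {P Q : Set G} {p : G} (hPQ : P ⊆ Q) (hp : p ∈ P) : vorCell Q p ⊆ vorCell P p :=
  fun _ hx => ⟨mem_nearestPts_of_subset hPQ hp hx.1,
    fun q hq => hx.2 q (nearestPts_subset_of_subset hPQ hp hx.1 hq)⟩

theorem voronoi_cell_antitone_general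
    {G : Type*} [Group G] [MetricSpace G] [LinearOrder G]
    (P Q : Set G) (hPQ : P ⊆ Q) :
    ∀ p ∈ P, vorCell Q p ⊆ vorCell P p ∧
      ∀ x ∈ vorCell Q p, nearestPts x P ⊆ nearestPts x Q :=
  fun _ hp => ⟨vorCell_subset_of_subset hPQ hp,
    fun _ hx => nearestPts_subset_of_subset hPQ hp hx.1⟩

/-- **Monotonicity of Voronoi cells.** For locally finite `P ⊆ Q` with all
nearest-point sets finite and nonempty, every Voronoi cell of `p ∈ P` relative
to `Q` is contained in the one relative to `P`; moreover for `x ∈ Θ(Q,p)` one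
has `D(x,P) ⊆ D(x,Q)`. -/
theorem voronoi_cell_antitone
    {G : Type*} [Group G] [MetricSpace G] [LinearOrder G]
    (hdinv : ∀ x y g : G, dist (x * g) (y * g) = dist x y)
    (P Q : Set G) (hPQ : P ⊆ Q) (hP : P.Nonempty)
    (hPlf : ∀ K : Set G, IsCompact K → (P ∩ K).Finite)
    (hQlf : ∀ K : Set G, IsCompact K → (Q ∩ K).Finite)
    (hfin : ∀ x : G, (nearestPts x P).Finite ∧ (nearestPts x P).Nonempty ∧
      (nearestPts x Q).Finite ∧ (nearestPts x Q).Nonempty) :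
    ∀ p ∈ P, vorCell Q p ⊆ vorCell P p ∧
      ∀ x ∈ vorCell Q p, nearestPts x P ⊆ nearestPts x Q :=
  voronoi_cell_antitone_general P Q hPQ
end

section
/- For every transverse G-space (X,μ,Y) and every r ≥ 1, the basic inequality holds: I_μ^{r+1}(Y) ≥ ι_μ(Y) · I_μ^r(Y). Consequently I_μ^{r+1}(Y) ≥ ι_μ(Y)^r for all r ≥ 1. -/
/-! Adding a point `y_{r+1} ∈ Y` shrinks the intersection `Y_{y₁} ∩ ⋯ ∩ Y_{y_r}` of return-time
sets while keeping the identity in it, so by monotonicity the Voronoi cell of the identity can only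
grow. Integrating out the extra coordinate against `μ_Y` gives `I^{r+1} ≥ μ_Y(X) · I^r`, and
iterating from Kac's lemma `I^1 = 1` gives `I^{r+1} ≥ μ_Y(X)^r`. -/

open MeasureTheory Set
open scoped ENNReal

/-- The `r`-th intersection covolume of a transverse `G`-space, expressed via
Kac's lemma as `I_μ^r(Y) = ∫_{Y^{⊗r}} m_G(Θ(Y_{y₁} ∩ ⋯ ∩ Y_{y_r}, e)) dμ_Y^{⊗r}`
for an equivariant Voronoi tessellation scheme `Θ` and transverse measure `νY`. -/
noncomputable def kacCovolume {G X : Type*} [Group G] [MeasurableSpace G]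
    [MeasurableSpace X] [MulAction G X]
    (mG : Measure G) (νY : Measure X) (Θ : Set G → G → Set G) (Y : Set X)
    (r : ℕ) : ℝ≥0∞ :=
  ∫⁻ v : Fin r → X, mG (Θ (⋂ i, {g : G | g • v i ∈ Y}) 1)
    ∂(Measure.pi fun _ : Fin r => νY)

theorem ae_pi_forall_mem {ι α : Type*} [Fintype ι] [MeasurableSpace α] {ν : Measure α}
    [SigmaFinite ν] {s : Set α} (hs : ν sᶜ = 0) :
    ∀ᵐ v ∂(Measure.pi fun _ : ι => ν), ∀ i, v i ∈ s :=
  ae_all_iff.2 fun i => ae_iff.2 (Measure.pi_eval_preimage_null (fun _ => ν) (i := i) hs)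

theorem measure_univ_mul_lintegral_le_lintegral_tail {α : Type*} [MeasurableSpace α]
    (ν : Measure α) [SigmaFinite ν] {n : ℕ} (F : (Fin n → α) → ℝ≥0∞) :
    ν univ * ∫⁻ u, F u ∂(Measure.pi fun _ => ν)
      ≤ ∫⁻ v, F (Fin.tail v) ∂(Measure.pi fun _ : Fin (n + 1) => ν) :=
  -- an inequality only, because `F` is not assumed measurable
  calc ν univ * ∫⁻ u, F u ∂(Measure.pi fun _ => ν)
      = ∫⁻ u, F u ∂((ν.prod (Measure.pi fun _ => ν)).map Prod.snd) := by
        rw [Measure.map_snd_prod, lintegral_smul_measure, smul_eq_mul]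
    _ ≤ ∫⁻ p, F p.2 ∂(ν.prod (Measure.pi fun _ => ν)) := lintegral_map_le _ _
    _ = ∫⁻ v, F (Fin.tail v) ∂(Measure.pi fun _ : Fin (n + 1) => ν) :=
        (measurePreserving_piFinSuccAbove (fun _ => ν) 0).lintegral_map_equiv _ _

theorem lintegral_pi_fin_one {α : Type*} [MeasurableSpace α] (ν : Measure α)
    (f : α → ℝ≥0∞) :
    ∫⁻ v : Fin 1 → α, f (v 0) ∂(Measure.pi fun _ => ν) = ∫⁻ a, f a ∂ν :=
  ((measurePreserving_funUnique ν (Fin 1)).lintegral_map_equiv f _).symm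

theorem pow_mul_le_of_mul_le_succ {M : Type*} [CommMonoid M] [PartialOrder M] [MulLeftMono M]
    {a : ℕ → M} {c : M} (h : ∀ n, 1 ≤ n → c * a n ≤ a (n + 1)) :
    ∀ k, c ^ k * a 1 ≤ a (k + 1)
  | 0 => by rw [pow_zero, one_mul]
  | k + 1 =>
    calc c ^ (k + 1) * a 1 = c * (c ^ k * a 1) := by rw [pow_succ', mul_assoc]
      _ ≤ c * a (k + 1) := mul_le_mul_right (pow_mul_le_of_mul_le_succ h k) c
      _ ≤ a (k + 2) := h _ (Nat.le_add_left 1 k)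

section
variable {G X : Type*} [Group G] [MeasurableSpace G] [MulAction G X] {mG : Measure G}
  {Θ : Set G → G → Set G} {Y : Set X}

theorem measure_voronoi_tail_le [TopologicalSpace G]
    (hlocfin : ∀ x : X, ∀ K : Set G, IsCompact K → ({g : G | g • x ∈ Y} ∩ K).Finite)
    (hΘmono : ∀ P Q : Set G, P.Nonempty →
      (∀ K : Set G, IsCompact K → (Q ∩ K).Finite) → P ⊆ Q →
      ∀ p ∈ P, Θ Q p ⊆ Θ P p)
    {n : ℕ} (hn : 1 ≤ n) {v : Fin (n + 1) → X} (hv : ∀ i, v i ∈ Y) :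
    mG (Θ (⋂ j, {g : G | g • Fin.tail v j ∈ Y}) 1)
      ≤ mG (Θ (⋂ i, {g : G | g • v i ∈ Y}) 1) := by
  have hmem : (1 : G) ∈ ⋂ i, {g : G | g • v i ∈ Y} := mem_iInter.2 fun i => by simpa using hv i
  have hsub : ⋂ i, {g : G | g • v i ∈ Y} ⊆ ⋂ j, {g : G | g • Fin.tail v j ∈ Y} :=
    subset_iInter fun j => iInter_subset _ j.succ
  have hfin : ∀ K : Set G, IsCompact K → ((⋂ j, {g : G | g • Fin.tail v j ∈ Y}) ∩ K).Finite :=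
    fun K hK => (hlocfin _ K hK).subset (inter_subset_inter_left _ (iInter_subset _ ⟨0, hn⟩))
  exact measure_mono (hΘmono _ _ ⟨1, hmem⟩ hfin hsub 1 hmem)

variable [MeasurableSpace X] {νY : Measure X}

theorem kacCovolume_one :
    kacCovolume mG νY Θ Y 1 = ∫⁻ y, mG (Θ {g : G | g • y ∈ Y} 1) ∂νY := by
  rw [← lintegral_pi_fin_one, kacCovolume]
  congr! 4 with v
  exact iInf_unique _

theorem measure_univ_mul_kacCovolume_le_succ [TopologicalSpace G] [SigmaFinite νY]
    (hsuppY : νY Yᶜ = 0)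
    (hlocfin : ∀ x : X, ∀ K : Set G, IsCompact K → ({g : G | g • x ∈ Y} ∩ K).Finite)
    (hΘmono : ∀ P Q : Set G, P.Nonempty →
      (∀ K : Set G, IsCompact K → (Q ∩ K).Finite) → P ⊆ Q →
      ∀ p ∈ P, Θ Q p ⊆ Θ P p)
    {n : ℕ} (hn : 1 ≤ n) :
    νY univ * kacCovolume mG νY Θ Y n ≤ kacCovolume mG νY Θ Y (n + 1) :=
  (measure_univ_mul_lintegral_le_lintegral_tail νY _).trans <| lintegral_mono_ae <|
    (ae_pi_forall_mem hsuppY).mono fun _ hv => measure_voronoi_tail_le hlocfin hΘmono hn hv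
end

theorem basic_inequality_general
    {G X : Type*}
    [Group G] [TopologicalSpace G] [MeasurableSpace G]
    (mG : Measure G) [MeasurableSpace X] [MulAction G X]
    (Y : Set X)
    (hlocfin : ∀ x : X, ∀ K : Set G, IsCompact K → ({g : G | g • x ∈ Y} ∩ K).Finite)
    -- the transverse measure `μ_Y`
    (νY : Measure X) [IsFiniteMeasure νY] (hsuppY : νY Yᶜ = 0)
    -- a monotone equivariant Voronoi tessellation scheme
    (Θ : Set G → G → Set G)
    (hΘmono : ∀ P Q : Set G, P.Nonempty →
      (∀ K : Set G, IsCompact K → (Q ∩ K).Finite) → P ⊆ Q →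
      ∀ p ∈ P, Θ Q p ⊆ Θ P p)
    -- Kac's lemma of order one: `I_μ^1(Y) = μ(X) = 1`
    (hKac1 : ∫⁻ y, mG (Θ {g : G | g • y ∈ Y} 1) ∂νY = 1)
    (r : ℕ) (hr : 1 ≤ r) :
    kacCovolume mG νY Θ Y (r + 1) ≥ νY Set.univ * kacCovolume mG νY Θ Y r ∧
    kacCovolume mG νY Θ Y (r + 1) ≥ (νY Set.univ) ^ r := by
  have hstep : ∀ n, 1 ≤ n →
      νY univ * kacCovolume mG νY Θ Y n ≤ kacCovolume mG νY Θ Y (n + 1) :=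
    fun _ => measure_univ_mul_kacCovolume_le_succ hsuppY hlocfin hΘmono
  have hone : kacCovolume mG νY Θ Y 1 = 1 := kacCovolume_one.trans hKac1
  refine ⟨hstep r hr, ?_⟩
  simpa only [hone, mul_one] using pow_mul_le_of_mul_le_succ hstep r

/-- **The basic inequality.** For every transverse `G`-space `(X, μ, Y)` and
`r ≥ 1`, `I_μ^{r+1}(Y) ≥ ι_μ(Y) · I_μ^r(Y)`, and consequently
`I_μ^{r+1}(Y) ≥ ι_μ(Y)^r`. Here the intensity is `ι_μ(Y) = μ_Y(Y)` and the
intersection covolumes are given by Kac's lemma. -/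
theorem basic_inequality
    {G X : Type*}
    [Group G] [TopologicalSpace G] [IsTopologicalGroup G] [LocallyCompactSpace G]
    [SecondCountableTopology G] [MeasurableSpace G] [BorelSpace G]
    (mG : Measure G) [mG.IsHaarMeasure] [mG.IsMulRightInvariant]
    [MeasurableSpace X] [StandardBorelSpace X]
    [MulAction G X] [MeasurableSMul G X]
    (μ : Measure X) [IsProbabilityMeasure μ] [SMulInvariantMeasure G X μ]
    (Y : Set X) (hY : MeasurableSet Y)
    (hcross : ∀ x : X, {g : G | g • x ∈ Y}.Nonempty)
    (hlocfin : ∀ x : X, ∀ K : Set G, IsCompact K → ({g : G | g • x ∈ Y} ∩ K).Finite)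
    -- the transverse measure `μ_Y`
    (w : G → ℝ≥0∞) (hw : Measurable w) (hw1 : ∫⁻ g, w g ∂mG = 1)
    (νY : Measure X) [IsFiniteMeasure νY] (hsuppY : νY Yᶜ = 0)
    (hνY : ∀ f : X → ℝ≥0∞, Measurable f →
      ∫⁻ y, f y ∂νY
        = ∫⁻ x, ∑' g : {g : G | g • x ∈ Y}, f ((g : G) • x) * w (g : G) ∂μ)
    -- a monotone equivariant Voronoi tessellation scheme
    (Θ : Set G → G → Set G)
    (hΘmono : ∀ P Q : Set G, P.Nonempty →
      (∀ K : Set G, IsCompact K → (Q ∩ K).Finite) → P ⊆ Q →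
      ∀ p ∈ P, Θ Q p ⊆ Θ P p)
    -- Kac's lemma of order one: `I_μ^1(Y) = μ(X) = 1`
    (hKac1 : ∫⁻ y, mG (Θ {g : G | g • y ∈ Y} 1) ∂νY = 1)
    (r : ℕ) (hr : 1 ≤ r) :
    kacCovolume mG νY Θ Y (r + 1) ≥ νY Set.univ * kacCovolume mG νY Θ Y r ∧
    kacCovolume mG νY Θ Y (r + 1) ≥ (νY Set.univ) ^ r :=
  basic_inequality_general mG Y hlocfin νY hsuppY Θ hΘmono hKac1 r hr
end

section
/- Let (Z,ζ) be a nonatomic standard probability space, 0 < ε < 1, Z_ε ⊆ Z Borel with ζ(Z_ε) = ε, r(z) = 1 + 1_{Z_ε}(z), T an ergodic probability preserving invertible transformation of (Z,ζ), and (X,μ) the suspension flow under r with μ = (1+ε)⁻¹ (ζ ⊗ Leb)|_X where X = {(z,t) : 0 ≤ t < r(z)}. With cross section Y = Z × {0}, the intensity is ι_μ(Y) = 1/(1+ε); with cross section Ỹ = Y ∪ (Z_ε × {1}), the intensity is ι_μ(Ỹ) = 1, and Ỹ is completely periodic: every return set Ỹ_{(z,t)} is a coset of ℤ < ℝ. 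-/
/-!
The roof takes only the values `1` and `2`, so the height of a point modulo `1` simply advances
with time: `(Φ u p).2 ≡ p.2 + u (mod 1)`. Hence the visits to the integer heights `Ỹ` happen
exactly at the times `-{p.2} + ℤ` (complete periodicity), and the transverse sum `∑ w(s)` over
them is the `1`-periodization of `w`, whose integral over a fibre `[0, r z)` is `r z`; thus
`ι(Ỹ) = ∫ r dζ / (1 + ε) = 1`. A visit to `Y` at time `n - {p.2}` happens iff `Φ n p` lies on the
bottom floor `t < 1`; by invariance of `μ` under `Φ n`, the intensity of `Y` is the `μ`-mass of
that floor weighted by the periodization of `w`, i.e. `1 / (1 + ε)`.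
-/

open MeasureTheory Set
open scoped ENNReal

theorem lintegral_Ico_tsum_neg_add_intCast {w : ℝ → ℝ≥0∞} (hw : Measurable w) (a : ℝ) :
    ∫⁻ t in Ico a (a + 1), ∑' n : ℤ, w (-t + n) = ∫⁻ t, w t := by
  have hshift (n : ℤ) :
      ∫⁻ t in Ico a (a + 1), w (-t + n) = ∫⁻ u in Ioc (-a - 1 + n) (-a - 1 + n + 1), w u := by
    have hmp := Measure.measurePreserving_sub_left volume (n : ℝ)
    have hemb : MeasurableEmbedding fun t : ℝ => (n : ℝ) - t :=
      (Homeomorph.subLeft (n : ℝ)).measurableEmbedding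
    simp_rw [neg_add_eq_sub]
    rw [hmp.setLIntegral_comp_emb hemb w, image_const_sub_Ico]
    congr 3 <;> ring
  rw [lintegral_tsum fun n : ℤ => by fun_prop]
  simp_rw [hshift]
  rw [← lintegral_iUnion (fun _ => measurableSet_Ioc) (pairwise_disjoint_Ioc_add_intCast _),
    iUnion_Ioc_add_intCast, Measure.restrict_univ]

theorem tsum_neg_fract_add_intCast {α : Type*} [AddCommMonoid α] [TopologicalSpace α]
    (f : ℝ → α) (t : ℝ) : ∑' n : ℤ, f (-Int.fract t + n) = ∑' n : ℤ, f (-t + n) := by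
  rw [← (Equiv.addLeft (-⌊t⌋)).tsum_eq]
  refine tsum_congr fun n => ?_
  simp only [Equiv.coe_addLeft, Int.cast_add, Int.cast_neg, Int.fract]
  ring_nf

theorem tsum_subtype_eq_tsum_indicator_add_intCast {α : Type*} [AddCommMonoid α]
    [TopologicalSpace α] (f : ℝ → α) {S : Set ℝ} (a : ℝ) (hS : S ⊆ {u | ∃ n : ℤ, u = a + n}) :
    ∑' s : S, f s = ∑' n : ℤ, S.indicator f (a + n) := by
  rw [tsum_subtype]
  refine ((add_right_injective a).comp Int.cast_injective |>.tsum_eq ?_).symm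
  refine (support_indicator_subset).trans fun u hu => ?_
  obtain ⟨n, rfl⟩ := hS hu
  exact ⟨n, rfl⟩

theorem tsum_setOf_eq_add_intCast {α : Type*} [AddCommMonoid α] [TopologicalSpace α]
    (f : ℝ → α) (a : ℝ) : ∑' s : {u | ∃ n : ℤ, u = a + n}, f s = ∑' n : ℤ, f (a + n) := by
  rw [tsum_subtype_eq_tsum_indicator_add_intCast f a subset_rfl]
  exact tsum_congr fun n => indicator_of_mem (s := {u | ∃ n : ℤ, u = a + n}) ⟨n, rfl⟩ f
section SuspensionFlow

variable {Z : Type*}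

def suspensionSpace (r : Z → ℝ) : Set (Z × ℝ) := {p | 0 ≤ p.2 ∧ p.2 < r p.1}

structure IsSuspensionFlow (T : Z → Z) (r : Z → ℝ) (Φ : ℝ → Z × ℝ → Z × ℝ) : Prop where
  map_zero : ∀ p ∈ suspensionSpace r, Φ 0 p = p
  map_add : ∀ s t : ℝ, ∀ p ∈ suspensionSpace r, Φ (s + t) p = Φ s (Φ t p)
  mapsTo : ∀ t : ℝ, ∀ p ∈ suspensionSpace r, Φ t p ∈ suspensionSpace r
  flow : ∀ (z : Z) (t s : ℝ), (z, t) ∈ suspensionSpace r → 0 ≤ s → t + s < r z →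
    Φ s (z, t) = (z, t + s)
  jump : ∀ (z : Z) (t : ℝ), (z, t) ∈ suspensionSpace r → Φ (r z - t) (z, t) = (T z, 0)

namespace IsSuspensionFlow

variable {T : Z → Z} {r : Z → ℝ} {Φ : ℝ → Z × ℝ → Z × ℝ}

theorem apply_of_snd_eq_intCast (hΦ : IsSuspensionFlow T r Φ)
    (hr : ∀ z, ∃ n : ℤ, r z = n) {q : Z × ℝ} (hq : q ∈ suspensionSpace r) {m : ℤ} (hm : q.2 = m)
    {v : ℝ} (hv : v ∈ Ico (0 : ℝ) 1) : Φ v q = (q.1, q.2 + v) := by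
  obtain ⟨n, hn⟩ := hr q.1
  have hmn : m < n := by exact_mod_cast hm ▸ hn ▸ hq.2
  have hmn' : (m : ℝ) + 1 ≤ n := by exact_mod_cast hmn
  exact hΦ.flow q.1 q.2 v hq hv.1 (by linarith [hv.2])

theorem exists_snd_apply_eq_of_mem_Icc (hΦ : IsSuspensionFlow T r Φ)
    (hr : ∀ z, ∃ n : ℤ, r z = n) {p : Z × ℝ} (hp : p ∈ suspensionSpace r) {u : ℝ}
    (hu : u ∈ Icc (0 : ℝ) 1) : ∃ k : ℤ, (Φ u p).2 = p.2 + u + k := by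
  obtain ⟨z, t⟩ := p
  obtain ⟨n, hn⟩ := hr z
  by_cases hfl : t + u < r z
  · exact ⟨0, by simp [hΦ.flow z t u hp hu.1 hfl]⟩
  · have hjump : Φ u (z, t) = Φ (t + u - r z) (T z, 0) := by
      rw [← hΦ.jump z t hp, ← hΦ.map_add _ _ _ hp]
      congr 1
      ring
    have hTz := hΦ.mapsTo (r z - t) _ hp
    rw [hΦ.jump z t hp] at hTz
    have hv : t + u - r z ∈ Ico (0 : ℝ) 1 := ⟨by linarith, by linarith [hp.2, hu.2]⟩
    refine ⟨-n, ?_⟩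
    rw [hjump, hΦ.apply_of_snd_eq_intCast hr hTz (m := 0) (by simp) hv, hn]
    push_cast
    ring

theorem exists_snd_apply_eq (hΦ : IsSuspensionFlow T r Φ)
    (hr : ∀ z, ∃ n : ℤ, r z = n) {p : Z × ℝ} (hp : p ∈ suspensionSpace r) (u : ℝ) :
    ∃ k : ℤ, (Φ u p).2 = p.2 + u + k := by
  let G : AddSubgroup ℝ :=
    { carrier := {u | ∀ p ∈ suspensionSpace r, ∃ k : ℤ, (Φ u p).2 = p.2 + u + k}
      zero_mem' := fun p hp => ⟨0, by simp [hΦ.map_zero p hp]⟩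
      add_mem' := by
        intro u v hu hv p hp
        obtain ⟨k, hk⟩ := hv p hp
        obtain ⟨l, hl⟩ := hu _ (hΦ.mapsTo v p hp)
        exact ⟨k + l, by rw [hΦ.map_add _ _ _ hp, hl, hk]; push_cast; ring⟩
      neg_mem' := by
        intro u hu p hp
        obtain ⟨k, hk⟩ := hu _ (hΦ.mapsTo (-u) p hp)
        rw [← hΦ.map_add _ _ _ hp, add_neg_cancel, hΦ.map_zero p hp] at hk
        exact ⟨-k, by push_cast; linarith⟩ }
  have hunit : Icc (0 : ℝ) 1 ⊆ G := fun u hu p hp => hΦ.exists_snd_apply_eq_of_mem_Icc hr hp hu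
  have hG : u ∈ G := by
    rw [← Int.floor_add_fract u, ← zsmul_one]
    exact G.add_mem (G.zsmul_mem (hunit ⟨zero_le_one, le_rfl⟩) _)
      (hunit ⟨Int.fract_nonneg u, (Int.fract_lt_one u).le⟩)
  exact hG p hp

theorem fract_snd_apply_intCast (hΦ : IsSuspensionFlow T r Φ)
    (hr : ∀ z, ∃ n : ℤ, r z = n) {p : Z × ℝ} (hp : p ∈ suspensionSpace r) (n : ℤ) :
    Int.fract (Φ n p).2 = Int.fract p.2 := by
  obtain ⟨k, hk⟩ := hΦ.exists_snd_apply_eq hr hp n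
  rw [hk, add_assoc, ← Int.cast_add, Int.fract_add_intCast]

theorem setOf_snd_apply_eq_intCast (hΦ : IsSuspensionFlow T r Φ)
    (hr : ∀ z, ∃ n : ℤ, r z = n) {p : Z × ℝ} (hp : p ∈ suspensionSpace r) :
    {u | ∃ m : ℤ, (Φ u p).2 = m} = {u | ∃ n : ℤ, u = -Int.fract p.2 + n} := by
  ext u
  obtain ⟨k, hk⟩ := hΦ.exists_snd_apply_eq hr hp u
  have hfloor := Int.floor_add_fract p.2
  simp only [mem_ofPred_eq, hk]
  constructor
  · rintro ⟨m, hm⟩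
    exact ⟨m - k - ⌊p.2⌋, by push_cast; linarith⟩
  · rintro ⟨n, rfl⟩
    exact ⟨⌊p.2⌋ + n + k, by push_cast; linarith⟩

theorem snd_apply_neg_fract_add_eq_zero_iff (hΦ : IsSuspensionFlow T r Φ)
    (hr : ∀ z, ∃ n : ℤ, r z = n) {p : Z × ℝ} (hp : p ∈ suspensionSpace r) (n : ℤ) :
    (Φ (-Int.fract p.2 + n) p).2 = 0 ↔ (Φ n p).2 < 1 := by
  set q := Φ (-Int.fract p.2 + n) p
  have hq : q ∈ suspensionSpace r := hΦ.mapsTo _ p hp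
  obtain ⟨m, hm⟩ : ∃ m : ℤ, q.2 = m := by
    have h : -Int.fract p.2 + n ∈ {u | ∃ m : ℤ, (Φ u p).2 = m} := by
      rw [hΦ.setOf_snd_apply_eq_intCast hr hp]; exact ⟨n, rfl⟩
    exact h
  have hfract := Int.fract_nonneg p.2
  have hfract1 := Int.fract_lt_one p.2
  have hΦn : Φ n p = (q.1, q.2 + Int.fract p.2) := by
    rw [← hΦ.apply_of_snd_eq_intCast hr hq hm ⟨hfract, hfract1⟩, ← hΦ.map_add _ _ _ hp,
      add_neg_cancel_left]
  have hm0 : (0 : ℤ) ≤ m := by exact_mod_cast hm ▸ hq.1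
  rw [hΦn, hm, Int.cast_eq_zero]
  constructor
  · rintro rfl
    simpa using hfract1
  · intro h
    have : (m : ℝ) < 1 := by linarith
    have : m < 1 := by exact_mod_cast this
    omega

theorem tsum_returns_zero_eq (hΦ : IsSuspensionFlow T r Φ)
    (hr : ∀ z, ∃ n : ℤ, r z = n) {p : Z × ℝ} (hp : p ∈ suspensionSpace r) (w : ℝ → ℝ≥0∞) :
    ∑' s : {u | (Φ u p).2 = 0}, w s
      = ∑' n : ℤ, (Iio (1 : ℝ)).indicator (fun t => w (-Int.fract t + n)) (Φ n p).2 := by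
  have hsub : {u | (Φ u p).2 = 0} ⊆ {u | ∃ n : ℤ, u = -Int.fract p.2 + n} := by
    rw [← hΦ.setOf_snd_apply_eq_intCast hr hp]
    exact fun u hu => ⟨0, by simpa using hu⟩
  rw [tsum_subtype_eq_tsum_indicator_add_intCast w _ hsub]
  refine tsum_congr fun n => ?_
  simp only [indicator_apply, mem_ofPred_eq, mem_Iio,
    hΦ.snd_apply_neg_fract_add_eq_zero_iff hr hp, hΦ.fract_snd_apply_intCast hr hp]

theorem lintegral_tsum_returns_zero (hΦ : IsSuspensionFlow T r Φ)
    (hr : ∀ z, ∃ n : ℤ, r z = n) [MeasurableSpace Z] {μ : Measure (Z × ℝ)}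
    (hμ : ∀ᵐ p ∂μ, p ∈ suspensionSpace r) (hΦm : ∀ n : ℤ, Measurable (Φ n))
    (hΦμ : ∀ n : ℤ, μ.map (Φ n) = μ) {w : ℝ → ℝ≥0∞} (hw : Measurable w) :
    ∫⁻ p, ∑' s : {u | (Φ u p).2 = 0}, w s ∂μ
      = ∫⁻ p, (Iio (1 : ℝ)).indicator (fun t => ∑' n : ℤ, w (-t + n)) p.2 ∂μ := by
  set G : ℤ → Z × ℝ → ℝ≥0∞ :=
    fun n q => (Iio (1 : ℝ)).indicator (fun t => w (-Int.fract t + n)) q.2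
  have hG (n : ℤ) : Measurable (G n) :=
    ((hw.comp (measurable_fract.neg.add_const _)).indicator measurableSet_Iio).comp measurable_snd
  calc ∫⁻ p, ∑' s : {u | (Φ u p).2 = 0}, w s ∂μ
      = ∫⁻ p, ∑' n : ℤ, G n (Φ n p) ∂μ :=
        lintegral_congr_ae (hμ.mono fun p hp => hΦ.tsum_returns_zero_eq hr hp w)
    _ = ∑' n : ℤ, ∫⁻ q, G n q ∂μ := by
        rw [lintegral_tsum (f := fun n p => G n (Φ n p))
          fun n => ((hG n).comp (hΦm n)).aemeasurable]
        exact tsum_congr fun n => by rw [← lintegral_map (hG n) (hΦm n), hΦμ n]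
    _ = ∫⁻ p, (Iio (1 : ℝ)).indicator (fun t => ∑' n : ℤ, w (-t + n)) p.2 ∂μ := by
        rw [← lintegral_tsum fun n => (hG n).aemeasurable]
        refine lintegral_congr fun q => ?_
        by_cases hq : q.2 < 1 <;> simp [G, hq, tsum_neg_fract_add_intCast]

end IsSuspensionFlow

theorem measurableSet_suspensionSpace [MeasurableSpace Z] {r : Z → ℝ} (hrm : Measurable r) :
    MeasurableSet (suspensionSpace r) :=
  (measurableSet_le measurable_const measurable_snd).inter
    (measurableSet_lt measurable_snd (hrm.comp measurable_fst))

theorem setLIntegral_suspensionSpace [MeasurableSpace Z] {ζ : Measure Z} [SFinite ζ]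
    {r : Z → ℝ} (hrm : Measurable r) {f : Z × ℝ → ℝ≥0∞} (hf : Measurable f) :
    ∫⁻ p in suspensionSpace r, f p ∂(ζ.prod volume)
      = ∫⁻ z, (∫⁻ t in Ico 0 (r z), f (z, t)) ∂ζ := by
  rw [← lintegral_indicator (measurableSet_suspensionSpace hrm),
    lintegral_prod _ (hf.indicator (measurableSet_suspensionSpace hrm)).aemeasurable]
  refine lintegral_congr fun z => ?_
  rw [← lintegral_indicator measurableSet_Ico]
  rfl

end SuspensionFlow

section TwoLevelRoof

variable {Z : Type*} {Zε : Set Z} {rf : Z → ℝ}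

theorem roof_of_mem (hrf : rf = fun z => 1 + Zε.indicator (fun _ => (1 : ℝ)) z) {z : Z}
    (hz : z ∈ Zε) : rf z = 2 := by
  simp [hrf, hz, one_add_one_eq_two]

theorem roof_of_notMem (hrf : rf = fun z => 1 + Zε.indicator (fun _ => (1 : ℝ)) z) {z : Z}
    (hz : z ∉ Zε) : rf z = 1 := by
  simp [hrf, hz]

theorem exists_roof_eq_intCast (hrf : rf = fun z => 1 + Zε.indicator (fun _ => (1 : ℝ)) z)
    (z : Z) : ∃ n : ℤ, rf z = n := by
  by_cases hz : z ∈ Zε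
  exacts [⟨2, by simp [roof_of_mem hrf hz]⟩, ⟨1, by simp [roof_of_notMem hrf hz]⟩]

theorem one_le_roof (hrf : rf = fun z => 1 + Zε.indicator (fun _ => (1 : ℝ)) z) (z : Z) :
    1 ≤ rf z := by
  by_cases hz : z ∈ Zε
  · rw [roof_of_mem hrf hz]; exact one_le_two
  · rw [roof_of_notMem hrf hz]

theorem mem_levels_iff_snd_eq_intCast (hrf : rf = fun z => 1 + Zε.indicator (fun _ => (1 : ℝ)) z)
    {q : Z × ℝ} (hq : q ∈ suspensionSpace rf) :
    (q.2 = 0 ∨ (q.1 ∈ Zε ∧ q.2 = 1)) ↔ ∃ m : ℤ, q.2 = m := by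
  constructor
  · rintro (h | ⟨-, h⟩)
    exacts [⟨0, by simp [h]⟩, ⟨1, by simp [h]⟩]
  · rintro ⟨m, hm⟩
    have h0 : (0 : ℤ) ≤ m := by exact_mod_cast hm ▸ hq.1
    have h2 := hq.2
    rw [hm] at h2
    by_cases hz : q.1 ∈ Zε
    · rw [roof_of_mem hrf hz] at h2
      have : m < 2 := by exact_mod_cast h2
      obtain rfl | rfl : m = 0 ∨ m = 1 := by omega
      exacts [Or.inl (by simpa using hm), Or.inr ⟨hz, by simpa using hm⟩]
    · rw [roof_of_notMem hrf hz] at h2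
      have : m < 1 := by exact_mod_cast h2
      exact Or.inl (by simpa [show m = 0 by omega] using hm)

theorem setLIntegral_Ico_roof (hrf : rf = fun z => 1 + Zε.indicator (fun _ => (1 : ℝ)) z)
    {P : ℝ → ℝ≥0∞} (hP : ∀ a, ∫⁻ t in Ico a (a + 1), P t = 1) (z : Z) :
    ∫⁻ t in Ico 0 (rf z), P t = 1 + Zε.indicator 1 z := by
  by_cases hz : z ∈ Zε
  · rw [roof_of_mem hrf hz, indicator_of_mem hz, ← Ico_union_Ico_eq_Ico zero_le_one one_le_two,
      lintegral_union measurableSet_Ico Ico_disjoint_Ico_same, ← zero_add (1 : ℝ), hP,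
      zero_add, ← one_add_one_eq_two, hP, Pi.one_apply]
  · rw [roof_of_notMem hrf hz, indicator_of_notMem hz, add_zero, ← zero_add (1 : ℝ), hP]

theorem measurable_roof [MeasurableSpace Z] (hZε : MeasurableSet Zε)
    (hrf : rf = fun z => 1 + Zε.indicator (fun _ => (1 : ℝ)) z) : Measurable rf :=
  hrf ▸ measurable_const.add (measurable_const.indicator hZε)

theorem setLIntegral_suspensionSpace_roof [MeasurableSpace Z] {ζ : Measure Z} [SFinite ζ]
    (hZε : MeasurableSet Zε) (hrf : rf = fun z => 1 + Zε.indicator (fun _ => (1 : ℝ)) z)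
    {P : ℝ → ℝ≥0∞} (hPm : Measurable P) (hP : ∀ a, ∫⁻ t in Ico a (a + 1), P t = 1) :
    ∫⁻ p in suspensionSpace rf, P p.2 ∂(ζ.prod volume) = ζ univ + ζ Zε := by
  rw [setLIntegral_suspensionSpace (measurable_roof hZε hrf) (f := fun p => P p.2)
    (hPm.comp measurable_snd)]
  simp only [setLIntegral_Ico_roof hrf hP]
  rw [lintegral_add_left measurable_const, lintegral_const, lintegral_indicator_one hZε, one_mul]

theorem setLIntegral_suspensionSpace_roof_indicator_Iio_one [MeasurableSpace Z] {ζ : Measure Z}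
    [SFinite ζ] (hZε : MeasurableSet Zε)
    (hrf : rf = fun z => 1 + Zε.indicator (fun _ => (1 : ℝ)) z) {P : ℝ → ℝ≥0∞}
    (hPm : Measurable P) (hP0 : ∫⁻ t in Ico 0 1, P t = 1) :
    ∫⁻ p in suspensionSpace rf, (Iio 1).indicator P p.2 ∂(ζ.prod volume) = ζ univ := by
  rw [setLIntegral_suspensionSpace (measurable_roof hZε hrf)
    (f := fun p => (Iio 1).indicator P p.2) ((hPm.indicator measurableSet_Iio).comp measurable_snd)]
  have hbot (z : Z) : Iio 1 ∩ Ico 0 (rf z) = Ico 0 1 := by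
    rw [inter_comm, Ico_inter_Iio, min_eq_right (one_le_roof hrf z)]
  simp_rw [setLIntegral_indicator measurableSet_Iio, hbot, hP0, lintegral_one]

end TwoLevelRoof

theorem suspension_flow_intensities_and_periodicity_general
    {Z : Type*} [MeasurableSpace Z]
    (ζ : Measure Z) [IsProbabilityMeasure ζ]
    (ε : ℝ) (hε0 : 0 < ε)
    (Zε : Set Z) (hZε : MeasurableSet Zε) (hζZε : ζ Zε = ENNReal.ofReal ε)
    (T : Z → Z)
    -- the roof function `r = 1 + 1_{Z_ε}`
    (rf : Z → ℝ)
    (hrf : rf = fun z => 1 + Set.indicator Zε (fun _ => (1 : ℝ)) z)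
    -- the phase space `X = {(z,t) : 0 ≤ t < r(z)}` and the suspension measure
    (Xs : Set (Z × ℝ)) (hXs : Xs = {p : Z × ℝ | 0 ≤ p.2 ∧ p.2 < rf p.1})
    (μ : Measure (Z × ℝ))
    (hμ : μ = (ENNReal.ofReal (1 + ε))⁻¹ • ((ζ.prod volume).restrict Xs))
    -- the suspension flow `Φ`
    (Φ : ℝ → Z × ℝ → Z × ℝ)
    (hΦmeas : ∀ t : ℝ, Measurable (Φ t))
    (hΦ0 : ∀ p ∈ Xs, Φ 0 p = p)
    (hΦadd : ∀ s t : ℝ, ∀ p ∈ Xs, Φ (s + t) p = Φ s (Φ t p))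
    (hΦXs : ∀ t : ℝ, ∀ p ∈ Xs, Φ t p ∈ Xs)
    (hΦflow : ∀ (z : Z) (t s : ℝ), (z, t) ∈ Xs → 0 ≤ s → t + s < rf z →
      Φ s (z, t) = (z, t + s))
    (hΦjump : ∀ (z : Z) (t : ℝ), (z, t) ∈ Xs →
      Φ (rf z - t) (z, t) = (T z, 0))
    (hΦinv : ∀ t : ℝ, Measure.map (Φ t) μ = μ)
    -- the two cross sections
    (Ys Yts : Set (Z × ℝ))
    (hYs : Ys = {p : Z × ℝ | p.2 = 0})
    (hYts : Yts = {p : Z × ℝ | p.2 = 0 ∨ (p.1 ∈ Zε ∧ p.2 = 1)})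
    -- their transverse measures
    (w : ℝ → ℝ≥0∞) (hw : Measurable w) (hw1 : ∫⁻ t, w t = 1)
    (νY νYt : Measure (Z × ℝ))
    (hνY : ∀ f : Z × ℝ → ℝ≥0∞, Measurable f →
      ∫⁻ p, f p ∂νY
        = ∫⁻ p, ∑' s : {t : ℝ | Φ t p ∈ Ys}, f (Φ (s : ℝ) p) * w (s : ℝ) ∂μ)
    (hνYt : ∀ f : Z × ℝ → ℝ≥0∞, Measurable f →
      ∫⁻ p, f p ∂νYt
        = ∫⁻ p, ∑' s : {t : ℝ | Φ t p ∈ Yts}, f (Φ (s : ℝ) p) * w (s : ℝ) ∂μ) :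
    -- `ι_μ(Y) = 1/(1+ε)`
    νY Set.univ = ENNReal.ofReal (1 / (1 + ε)) ∧
    -- `ι_μ(Ỹ) = 1`
    νYt Set.univ = 1 ∧
    -- `Ỹ` is completely periodic: every return set is a coset of `ℤ`
    (∀ p ∈ Xs, ∃ s : ℝ,
      {t : ℝ | Φ t p ∈ Yts} = {t : ℝ | ∃ n : ℤ, t = s + (n : ℝ)}) := by
  replace hXs : Xs = suspensionSpace rf := hXs
  subst hXs hμ hYs hYts
  have hΦ : IsSuspensionFlow T rf Φ := ⟨hΦ0, hΦadd, hΦXs, hΦflow, hΦjump⟩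
  have hr := exists_roof_eq_intCast hrf
  have hμX := Measure.ae_smul_measure (ae_restrict_mem (μ := ζ.prod volume)
    (measurableSet_suspensionSpace (measurable_roof hZε hrf))) (ENNReal.ofReal (1 + ε))⁻¹
  have hret (p) (hp : p ∈ suspensionSpace rf) :
      {t | Φ t p ∈ {p : Z × ℝ | p.2 = 0 ∨ (p.1 ∈ Zε ∧ p.2 = 1)}}
        = {t | ∃ n : ℤ, t = -Int.fract p.2 + n} := by
    rw [← hΦ.setOf_snd_apply_eq_intCast hr hp]
    ext u
    exact mem_levels_iff_snd_eq_intCast hrf (hΦ.mapsTo u p hp)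
  have hP (a : ℝ) : ∫⁻ t in Ico a (a + 1), ∑' n : ℤ, w (-t + n) = 1 :=
    (lintegral_Ico_tsum_neg_add_intCast hw a).trans hw1
  have hPm : Measurable fun t : ℝ => ∑' n : ℤ, w (-t + n) := by fun_prop
  refine ⟨?_, ?_, fun p hp => ⟨_, hret p hp⟩⟩
  · rw [← lintegral_one, hνY _ measurable_const]
    simp only [one_mul, mem_ofPred_eq]
    rw [hΦ.lintegral_tsum_returns_zero hr hμX (fun n => hΦmeas n) (fun n => hΦinv n) hw,
      lintegral_smul_measure, setLIntegral_suspensionSpace_roof_indicator_Iio_one hZε hrf hPm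
        (by simpa using hP 0), measure_univ, smul_eq_mul, mul_one, one_div,
      ENNReal.ofReal_inv_of_pos (by linarith)]
  · rw [← lintegral_one, hνYt _ measurable_const]
    simp only [one_mul]
    rw [lintegral_congr_ae (hμX.mono fun p hp => by
        rw [hret p hp, tsum_setOf_eq_add_intCast, tsum_neg_fract_add_intCast]),
      lintegral_smul_measure, setLIntegral_suspensionSpace_roof hZε hrf hPm hP, measure_univ,
      hζZε, ENNReal.ofReal_add zero_le_one hε0.le, ENNReal.ofReal_one, smul_eq_mul,
      ENNReal.inv_mul_cancel (by simp) (by simp)]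

/-- **No gap in the basic inequality: suspension flows.** Let `(Z, ζ)` be a
nonatomic standard probability space, `0 < ε < 1`, `Z_ε ⊆ Z` Borel with
`ζ(Z_ε) = ε`, roof function `r = 1 + 1_{Z_ε}`, `T` an ergodic probability
preserving invertible transformation, and `(X, μ)` the suspension flow `Φ`
under `r`, with `μ = (1+ε)⁻¹ (ζ ⊗ Leb)|_X`. Then the cross section
`Y = Z × {0}` has intensity `ι_μ(Y) = 1/(1+ε)`, the cross section
`Ỹ = Y ∪ (Z_ε × {1})` has intensity `ι_μ(Ỹ) = 1`, and `Ỹ` is completely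
periodic: every return set is a coset of `ℤ < ℝ`. -/
theorem suspension_flow_intensities_and_periodicity
    {Z : Type*} [MeasurableSpace Z] [StandardBorelSpace Z]
    (ζ : Measure Z) [IsProbabilityMeasure ζ] [NullSingletonClass ζ]
    (ε : ℝ) (hε0 : 0 < ε) (hε1 : ε < 1)
    (Zε : Set Z) (hZε : MeasurableSet Zε) (hζZε : ζ Zε = ENNReal.ofReal ε)
    (T : Z → Z) (hTmeas : Measurable T) (hTbij : Function.Bijective T)
    (hTerg : Ergodic T ζ)
    -- the roof function `r = 1 + 1_{Z_ε}`
    (rf : Z → ℝ)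
    (hrf : rf = fun z => 1 + Set.indicator Zε (fun _ => (1 : ℝ)) z)
    -- the phase space `X = {(z,t) : 0 ≤ t < r(z)}` and the suspension measure
    (Xs : Set (Z × ℝ)) (hXs : Xs = {p : Z × ℝ | 0 ≤ p.2 ∧ p.2 < rf p.1})
    (μ : Measure (Z × ℝ))
    (hμ : μ = (ENNReal.ofReal (1 + ε))⁻¹ • ((ζ.prod volume).restrict Xs))
    -- the suspension flow `Φ`
    (Φ : ℝ → Z × ℝ → Z × ℝ)
    (hΦmeas : ∀ t : ℝ, Measurable (Φ t))
    (hΦ0 : ∀ p ∈ Xs, Φ 0 p = p)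
    (hΦadd : ∀ s t : ℝ, ∀ p ∈ Xs, Φ (s + t) p = Φ s (Φ t p))
    (hΦXs : ∀ t : ℝ, ∀ p ∈ Xs, Φ t p ∈ Xs)
    (hΦflow : ∀ (z : Z) (t s : ℝ), (z, t) ∈ Xs → 0 ≤ s → t + s < rf z →
      Φ s (z, t) = (z, t + s))
    (hΦjump : ∀ (z : Z) (t : ℝ), (z, t) ∈ Xs →
      Φ (rf z - t) (z, t) = (T z, 0))
    (hΦinv : ∀ t : ℝ, Measure.map (Φ t) μ = μ)
    -- the two cross sections
    (Ys Yts : Set (Z × ℝ))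
    (hYs : Ys = {p : Z × ℝ | p.2 = 0})
    (hYts : Yts = {p : Z × ℝ | p.2 = 0 ∨ (p.1 ∈ Zε ∧ p.2 = 1)})
    -- their transverse measures
    (w : ℝ → ℝ≥0∞) (hw : Measurable w) (hw1 : ∫⁻ t, w t = 1)
    (νY νYt : Measure (Z × ℝ))
    (hνY : ∀ f : Z × ℝ → ℝ≥0∞, Measurable f →
      ∫⁻ p, f p ∂νY
        = ∫⁻ p, ∑' s : {t : ℝ | Φ t p ∈ Ys}, f (Φ (s : ℝ) p) * w (s : ℝ) ∂μ)
    (hνYt : ∀ f : Z × ℝ → ℝ≥0∞, Measurable f →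
      ∫⁻ p, f p ∂νYt
        = ∫⁻ p, ∑' s : {t : ℝ | Φ t p ∈ Yts}, f (Φ (s : ℝ) p) * w (s : ℝ) ∂μ) :
    -- `ι_μ(Y) = 1/(1+ε)`
    νY Set.univ = ENNReal.ofReal (1 / (1 + ε)) ∧
    -- `ι_μ(Ỹ) = 1`
    νYt Set.univ = 1 ∧
    -- `Ỹ` is completely periodic: every return set is a coset of `ℤ`
    (∀ p ∈ Xs, ∃ s : ℝ,
      {t : ℝ | Φ t p ∈ Yts} = {t : ℝ | ∃ n : ℤ, t = s + (n : ℝ)}) :=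
  suspension_flow_intensities_and_periodicity_general ζ ε hε0 Zε hZε hζZε T rf hrf Xs hXs μ hμ Φ
    hΦmeas hΦ0 hΦadd hΦXs hΦflow hΦjump hΦinv Ys Yts hYs hYts w hw hw1 νY νYt hνY hνYt
end
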